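/- The logistic sequential model is ordinal according to the paired categories concept: for every pair of categories s < r, the ratio π_r(θ)/π_s(θ) is a strictly increasing function of θ. -/

import Mathlib

/-!
Writing `σ` for the logistic function and `S n θ = ∏_{l ≤ n} σ(θ - δ_l)` for `P(Y ≥ n | θ)`, the
identity `1 - σ(x) = e^{-x} σ(x)` turns every `π_r` with `r < k` into `e^{δ_{r+1} - θ} S_{r+1}(θ)`,
while `π_k = S_k`. Hence for `s < r` the ratio `π_r / π_s` is a positive constant times the nonempty
product `∏_{s+1 < l ≤ r+1} σ(θ - δ_l)` when `r < k`, and `e^{θ - δ_{s+1}}` times a product of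
increasing positive factors when `r = k`; either way it is strictly increasing.
-/

open Real Finset

lemma Real.exp_div_one_add_exp (x : ℝ) : exp x / (1 + exp x) = sigmoid x := by
  rw [sigmoid_def, exp_neg]
  field_simp
  ring

lemma Real.one_sub_sigmoid (x : ℝ) : 1 - sigmoid x = exp (-x) * sigmoid x := by
  rw [← sigmoid_neg, ← sigmoid_mul_rexp_neg, mul_comm]

section ProdSigmoid

variable {ι : Type*} (δ : ι → ℝ)

lemma prod_sigmoid_sub_pos (s : Finset ι) (θ : ℝ) : 0 < ∏ l ∈ s, sigmoid (θ - δ l) :=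
  prod_pos fun _ _ ↦ sigmoid_pos _

lemma monotone_prod_sigmoid_sub (s : Finset ι) : Monotone fun θ ↦ ∏ l ∈ s, sigmoid (θ - δ l) :=
  fun _ _ h ↦ prod_le_prod (fun _ _ ↦ (sigmoid_pos _).le) fun _ _ ↦ sigmoid_le (by linarith)

lemma strictMono_prod_sigmoid_sub {s : Finset ι} (hs : s.Nonempty) :
    StrictMono fun θ ↦ ∏ l ∈ s, sigmoid (θ - δ l) :=
  fun _ _ h ↦ prod_lt_prod_of_nonempty (fun _ _ ↦ sigmoid_pos _)
    (fun _ _ ↦ sigmoid_lt (by linarith)) hs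

end ProdSigmoid

namespace LogisticSequential

/-- `P(Y ≥ n | θ)` in the logistic sequential model. -/
noncomputable def survival (δ : ℕ → ℝ) (n : ℕ) (θ : ℝ) : ℝ :=
  ∏ l ∈ Icc 1 n, sigmoid (θ - δ l)

variable (δ : ℕ → ℝ)

lemma survival_pos (n : ℕ) (θ : ℝ) : 0 < survival δ n θ :=
  prod_sigmoid_sub_pos δ _ θ

lemma survival_mul_one_sub_sigmoid (r : ℕ) (θ : ℝ) :
    survival δ r θ * (1 - sigmoid (θ - δ (r + 1))) = exp (δ (r + 1) - θ) * survival δ (r + 1) θ := by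
  rw [one_sub_sigmoid, survival, survival, prod_Icc_succ_top (by omega), neg_sub]
  ring

lemma survival_div_survival {m n : ℕ} (h : m ≤ n) (θ : ℝ) :
    survival δ n θ / survival δ m θ = ∏ l ∈ Ioc m n, sigmoid (θ - δ l) := by
  rw [div_eq_iff (survival_pos δ m θ).ne', survival, survival, ← zero_add 1,
    Icc_add_one_left_eq_Ioc, Icc_add_one_left_eq_Ioc, ← prod_Ioc_consecutive _ (Nat.zero_le m) h,
    mul_comm]

end LogisticSequential

open LogisticSequential

/-- The logistic sequential model is ordinal according to the paired
categories concept. -/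
theorem logistic_sequential_paired_categories
    (k : ℕ) (δ : ℕ → ℝ) (p : ℕ → ℝ → ℝ)
    (hpr : ∀ r, r < k → ∀ θ,
      p r θ = (∏ l ∈ Finset.Icc 1 r, Real.exp (θ - δ l) / (1 + Real.exp (θ - δ l))) *
        (1 - Real.exp (θ - δ (r + 1)) / (1 + Real.exp (θ - δ (r + 1)))))
    (hpk : ∀ θ, p k θ = ∏ l ∈ Finset.Icc 1 k, Real.exp (θ - δ l) / (1 + Real.exp (θ - δ l))) :
    ∀ s r, s < r → r ≤ k → StrictMono (fun θ => p r θ / p s θ) := by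
  replace hpr (r) (hr : r < k) (θ) : p r θ = exp (δ (r + 1) - θ) * survival δ (r + 1) θ := by
    rw [hpr r hr, ← survival_mul_one_sub_sigmoid, survival]
    simp only [exp_div_one_add_exp]
  replace hpk (θ) : p k θ = survival δ k θ := by
    rw [hpk, survival]
    simp only [exp_div_one_add_exp]
  intro s r hsr hrk
  have hs := hpr s (hsr.trans_le hrk)
  obtain rfl | hrk := hrk.eq_or_lt
  · have hratio : (fun θ ↦ p r θ / p s θ) =
        fun θ ↦ exp (θ - δ (s + 1)) * ∏ l ∈ Ioc (s + 1) r, sigmoid (θ - δ l) := by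
      ext θ
      rw [hpk, hs, ← survival_div_survival δ hsr, ← neg_sub, exp_neg]
      field_simp
    rw [hratio]
    exact StrictMono.mul_monotone (fun _ _ h ↦ exp_lt_exp.2 (sub_lt_sub_right h _))
      (monotone_prod_sigmoid_sub δ _) (fun _ ↦ (exp_pos _).le) (prod_sigmoid_sub_pos δ _)
  · have hratio : (fun θ ↦ p r θ / p s θ) =
        fun θ ↦ exp (δ (r + 1) - δ (s + 1)) * ∏ l ∈ Ioc (s + 1) (r + 1), sigmoid (θ - δ l) := by
      ext θ
      rw [hpr r hrk, hs, mul_div_mul_comm, ← exp_sub, survival_div_survival δ (by omega),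
        sub_sub_sub_cancel_right]
    rw [hratio]
    exact (strictMono_prod_sigmoid_sub δ (nonempty_Ioc.2 (by omega))).const_mul (exp_pos _)
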